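/- Let H be a graph with at least one edge and no isolated edges such that k0 = k1 < k1' < k0', and suppose k0' ≥ k1' + (k0' − k0)/(k0 + 1). Then for every integer n ≥ |H|, sat(n, H) ≥ (k0 + (k1' − k0)/k1')·n/2 − c2, where c2 = (k0 + 2)(k1' − k0)/(2·k1') + (k0 + 1)²/8. -/

import Mathlib

open SimpleGraph

/-- `G` contains a subgraph isomorphic to `H`. -/
def ContainsCopy {α β : Type*} (G : SimpleGraph α) (H : SimpleGraph β) : Prop :=
  ∃ f : β → α, Function.Injective f ∧ ∀ ⦃u v : β⦄, H.Adj u v → G.Adj (f u) (f v)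

/-- `G` is `H`-saturated: `G` is `H`-free but adding any edge creates a copy of `H`. -/
def IsSat {α β : Type*} (G : SimpleGraph α) (H : SimpleGraph β) : Prop :=
  ¬ ContainsCopy G H ∧
    ∀ x y : α, x ≠ y → ¬ G.Adj x y →
      ContainsCopy (G ⊔ SimpleGraph.fromEdgeSet {s(x, y)}) H

/-- The degree of a vertex. -/
noncomputable def deg {α : Type*} (G : SimpleGraph α) (v : α) : ℕ :=
  (G.neighborSet v).ncard

/-- `wt0 uv = max (d u) (d v) - 1`. -/
noncomputable def wt0 {β : Type*} (H : SimpleGraph β) (u v : β) : ℕ :=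
  max (deg H u) (deg H v) - 1

/-- The neighborhood of the edge `uv`: `(N(u) - v) ∪ (N(v) - u)`. -/
def edgeNbhd {β : Type*} (H : SimpleGraph β) (u v : β) : Set β :=
  (H.neighborSet u \ {v}) ∪ (H.neighborSet v \ {u})

/-- `wt1 uv`: the maximum degree of a vertex in the neighborhood of the edge `uv`. -/
noncomputable def wt1 {β : Type*} (H : SimpleGraph β) (u v : β) : ℕ :=
  sSup (deg H '' edgeNbhd H u v)

/-- `k0`: the minimum of `wt0` over the edges of `H`. -/
noncomputable def paramK0 {β : Type*} (H : SimpleGraph β) : ℕ :=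
  sInf {k | ∃ u v, H.Adj u v ∧ wt0 H u v = k}

/-- `k1`: the minimum of `wt1` over the edges of `H`. -/
noncomputable def paramK1 {β : Type*} (H : SimpleGraph β) : ℕ :=
  sInf {k | ∃ u v, H.Adj u v ∧ wt1 H u v = k}

/-- `k1'`: the minimum of `wt1` over the edges of `H` minimizing `wt0`. -/
noncomputable def paramK1p {β : Type*} (H : SimpleGraph β) : ℕ :=
  sInf {k | ∃ u v, H.Adj u v ∧ wt0 H u v = paramK0 H ∧ wt1 H u v = k}

/-- `k0'`: the minimum of `wt0` over the edges of `H` minimizing `wt1`. -/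
noncomputable def paramK0p {β : Type*} (H : SimpleGraph β) : ℕ :=
  sInf {k | ∃ u v, H.Adj u v ∧ wt1 H u v = paramK1 H ∧ wt0 H u v = k}

/-!
Write `k = k0`, `p = k1'`, `q = k0'` and `α = (p - k) / p`. If `xy` is a non-edge of the
saturated graph `G`, a copy of `H` in `G + xy` sends some edge `uv` of `H` onto `xy`, so
`wt0 uv ≤ max (d x) (d y)` and some neighbour of `x` or `y` has degree at least `wt1 uv`.
By the definitions of the parameters and `k0 = k1`, non-adjacent vertices cannot both have
degree `< k`; if both have degree `≤ k`, one of them has a neighbour of degree `≥ p`; if both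
have degree `< q`, one of them has a neighbour of degree `> k`.

Give every vertex `v` the charge `k + α - d v`. Each vertex of degree `≥ p` then receives `α`
from each of its neighbours of degree `≤ k`, and each vertex of degree `≤ k` having such a
neighbour gives away `α`; this does not decrease the total charge. Vertices of degree `< k` form a
clique, so they carry at most `(k + 1)² / 4` in total; low vertices with no neighbour of degree
`≥ p` form a clique of size `≤ k + 1`; a vertex of degree `≥ p` ends with charge `≤ 0` (this is
where `k0' ≥ k1' + (k0' - k0) / (k0 + 1)` enters) unless its degree is `< q` and all its
neighbours are low, and there is at most one such vertex. Summing,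
`(k + α) n - 2 e(G) ≤ (k + 2) α + (k + 1)² / 4`.
-/

open Finset

section

variable {V β : Type*}

lemma deg_eq_degree (G : SimpleGraph V) (v : V) [Fintype (G.neighborSet v)] :
    deg G v = G.degree v := by
  rw [deg, Set.ncard_eq_toFinset_card', Set.toFinset_card, card_neighborSet_eq_degree]

lemma deg_le_deg_of_injective [Finite V] {G : SimpleGraph V} {H : SimpleGraph β} {f : β → V}
    (hf : f.Injective) (hom : ∀ ⦃a b⦄, H.Adj a b → G.Adj (f a) (f b)) (a : β) :
    deg H a ≤ deg G (f a) := by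
  rw [deg, ← Set.ncard_image_of_injective _ hf]
  exact Set.ncard_le_ncard (Set.image_subset_iff.2 fun b hb => hom hb) (Set.toFinite _)

lemma deg_sup_edge_le [Finite V] (G : SimpleGraph V) (x y : V) :
    deg (G ⊔ edge x y) x ≤ deg G x + 1 := by
  have hsub : (G ⊔ edge x y).neighborSet x ⊆ insert y (G.neighborSet x) := by
    intro w hw
    simp only [mem_neighborSet, sup_adj, edge_adj] at hw
    simp only [Set.mem_insert_iff, mem_neighborSet]
    grind
  exact (Set.ncard_le_ncard hsub (Set.toFinite _)).trans (Set.ncard_insert_le _ _)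

lemma sup_edge_adj_of_ne {G : SimpleGraph V} {x y c w : V} (hx : c ≠ x) (hy : c ≠ y) :
    (G ⊔ edge x y).Adj c w ↔ G.Adj c w := by
  simp [edge_adj, hx, hy]

lemma deg_sup_edge_of_ne {G : SimpleGraph V} {x y c : V} (hx : c ≠ x) (hy : c ≠ y) :
    deg (G ⊔ edge x y) c = deg G c := by
  unfold deg
  congr 1
  ext w
  exact sup_edge_adj_of_ne hx hy

section EdgeWeights

variable {H : SimpleGraph β} {u v w : β}

lemma ne_of_mem_edgeNbhd (hw : w ∈ edgeNbhd H u v) : w ≠ u ∧ w ≠ v := by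
  rcases hw with ⟨hw, hwv⟩ | ⟨hw, hwu⟩
  · exact ⟨(H.ne_of_adj hw).symm, hwv⟩
  · exact ⟨hwu, (H.ne_of_adj hw).symm⟩

lemma exists_mem_edgeNbhd_deg_eq_wt1 [Finite β] (h : (edgeNbhd H u v).Nonempty) :
    ∃ w ∈ edgeNbhd H u v, deg H w = wt1 H u v :=
  Nat.sSup_mem (h.image _) (Set.toFinite _).bddAbove

lemma paramK0_le_wt0 (h : H.Adj u v) : paramK0 H ≤ wt0 H u v :=
  Nat.sInf_le ⟨u, v, h, rfl⟩

lemma paramK1_le_wt1 (h : H.Adj u v) : paramK1 H ≤ wt1 H u v :=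
  Nat.sInf_le ⟨u, v, h, rfl⟩

lemma paramK1p_le_wt1 (h : H.Adj u v) (h0 : wt0 H u v = paramK0 H) : paramK1p H ≤ wt1 H u v :=
  Nat.sInf_le ⟨u, v, h, h0, rfl⟩

lemma paramK0p_le_wt0 (h : H.Adj u v) (h1 : wt1 H u v = paramK1 H) : paramK0p H ≤ wt0 H u v :=
  Nat.sInf_le ⟨u, v, h, h1, rfl⟩

end EdgeWeights

section Saturation

variable {G : SimpleGraph V} {H : SimpleGraph β} {x y : V}

lemma wt_le_of_copy_sup_edge [Finite V] [Finite β] {f : β → V} (hf : f.Injective)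
    (hom : ∀ ⦃a b⦄, H.Adj a b → (G ⊔ edge x y).Adj (f a) (f b)) {u v : β}
    (hne : (edgeNbhd H u v).Nonempty) (hu : f u = x) (hv : f v = y) :
    wt0 H u v ≤ max (deg G x) (deg G y) ∧ ∃ z, (G.Adj x z ∨ G.Adj y z) ∧ wt1 H u v ≤ deg G z := by
  constructor
  · have hdu := hu ▸ deg_le_deg_of_injective hf hom u
    have hdv := hv ▸ deg_le_deg_of_injective hf hom v
    have hx := deg_sup_edge_le G x y
    have hy := deg_sup_edge_le G y x
    rw [edge_comm] at hy
    unfold wt0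
    omega
  · obtain ⟨w, hw, hdeg⟩ := exists_mem_edgeNbhd_deg_eq_wt1 hne
    have hwx : f w ≠ x := hu ▸ hf.ne (ne_of_mem_edgeNbhd hw).1
    have hwy : f w ≠ y := hv ▸ hf.ne (ne_of_mem_edgeNbhd hw).2
    refine ⟨f w, ?_, ?_⟩
    · rcases hw with ⟨hw, -⟩ | ⟨hw, -⟩
      · exact .inl ((sup_edge_adj_of_ne hwx hwy).1 (hu ▸ hom hw).symm).symm
      · exact .inr ((sup_edge_adj_of_ne hwx hwy).1 (hv ▸ hom hw).symm).symm
    · rw [← hdeg, ← deg_sup_edge_of_ne hwx hwy]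
      exact deg_le_deg_of_injective hf hom w

variable [Fintype V] [DecidableRel G.Adj] [Finite β]

lemma IsSat.exists_wt_le (hG : IsSat G H)
    (hiso : ∀ u v, H.Adj u v → (edgeNbhd H u v).Nonempty) (hxy : x ≠ y) (hnadj : ¬G.Adj x y) :
    ∃ u v, H.Adj u v ∧ wt0 H u v ≤ max (G.degree x) (G.degree y) ∧
      ∃ z, (G.Adj x z ∨ G.Adj y z) ∧ wt1 H u v ≤ G.degree z := by
  obtain ⟨f, hf, hom⟩ := hG.2 x y hxy hnadj
  obtain ⟨u, v, huv, hnG⟩ : ∃ u v, H.Adj u v ∧ ¬G.Adj (f u) (f v) := by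
    by_contra! h
    exact hG.1 (by unfold ContainsCopy; exact ⟨f, hf, h⟩)
  have hends : f u = x ∧ f v = y ∨ f u = y ∧ f v = x := by
    have := hom huv
    simp only [sup_adj, hnG, false_or, fromEdgeSet_adj, Set.mem_singleton_iff, Sym2.eq_iff] at this
    exact this.1
  simp only [← deg_eq_degree]
  rcases hends with ⟨hu, hv⟩ | ⟨hu, hv⟩
  · exact ⟨u, v, huv, wt_le_of_copy_sup_edge hf hom (hiso u v huv) hu hv⟩
  · exact ⟨v, u, huv.symm, wt_le_of_copy_sup_edge hf hom (hiso v u huv.symm) hv hu⟩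

lemma IsSat.paramK0_le_max_degree (hG : IsSat G H)
    (hiso : ∀ u v, H.Adj u v → (edgeNbhd H u v).Nonempty) (hxy : x ≠ y) (hnadj : ¬G.Adj x y) :
    paramK0 H ≤ max (G.degree x) (G.degree y) := by
  obtain ⟨u, v, huv, h0, -⟩ := hG.exists_wt_le hiso hxy hnadj
  exact (paramK0_le_wt0 huv).trans h0

lemma IsSat.exists_adj_paramK0_lt_degree (hG : IsSat G H)
    (hiso : ∀ u v, H.Adj u v → (edgeNbhd H u v).Nonempty) (hxy : x ≠ y) (hnadj : ¬G.Adj x y)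
    (h01 : paramK0 H = paramK1 H) (hmax : max (G.degree x) (G.degree y) < paramK0p H) :
    ∃ z, (G.Adj x z ∨ G.Adj y z) ∧ paramK0 H < G.degree z := by
  obtain ⟨u, v, huv, h0, z, hz, h1⟩ := hG.exists_wt_le hiso hxy hnadj
  refine ⟨z, hz, lt_of_lt_of_le ?_ h1⟩
  rw [h01]
  refine (paramK1_le_wt1 huv).lt_of_ne fun h => ?_
  have := paramK0p_le_wt0 huv h.symm
  omega

lemma IsSat.exists_adj_paramK1p_le_degree (hG : IsSat G H)
    (hiso : ∀ u v, H.Adj u v → (edgeNbhd H u v).Nonempty) (hxy : x ≠ y) (hnadj : ¬G.Adj x y)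
    (hmax : max (G.degree x) (G.degree y) ≤ paramK0 H) :
    ∃ z, (G.Adj x z ∨ G.Adj y z) ∧ paramK1p H ≤ G.degree z := by
  obtain ⟨u, v, huv, h0, z, hz, h1⟩ := hG.exists_wt_le hiso hxy hnadj
  exact ⟨z, hz, (paramK1p_le_wt1 huv ((h0.trans hmax).antisymm (paramK0_le_wt0 huv))).trans h1⟩

end Saturation

namespace SimpleGraph

variable [Fintype V]

theorem IsClique.card_le_degree_add_one {G : SimpleGraph V} [DecidableRel G.Adj] {s : Finset V}
    (hs : G.IsClique (s : Set V)) {v : V} (hv : v ∈ s) : #s ≤ G.degree v + 1 := by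
  classical
  have hsub : s.erase v ⊆ G.neighborFinset v := fun w hw =>
    (mem_neighborFinset _ _ _).2 (hs hv (mem_of_mem_erase hw) (ne_of_mem_erase hw).symm)
  have := card_le_card hsub
  rw [card_erase_of_mem hv, card_neighborFinset_eq_degree] at this
  omega

theorem IsClique.sum_sub_degree_le {G : SimpleGraph V} [DecidableRel G.Adj] {s : Finset V}
    (hs : G.IsClique (s : Set V)) (k : ℝ) : ∑ v ∈ s, (k - G.degree v) ≤ (k + 1) ^ 2 / 4 := by
  have hterm : ∀ v ∈ s, k - G.degree v ≤ k + 1 - #s := fun v hv => by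
    have : (#s : ℝ) ≤ G.degree v + 1 := by exact_mod_cast hs.card_le_degree_add_one hv
    linarith
  calc ∑ v ∈ s, (k - G.degree v) ≤ ∑ v ∈ s, (k + 1 - #s) := sum_le_sum hterm
    _ = #s * (k + 1 - #s) := by rw [sum_const, nsmul_eq_mul]
    _ ≤ (k + 1) ^ 2 / 4 := by nlinarith [sq_nonneg ((#s : ℝ) - (k + 1) / 2)]

variable (G : SimpleGraph V) [DecidableRel G.Adj]

theorem card_le_sum_card_inter_neighborFinset [DecidableEq V] {s t : Finset V}
    (h : ∀ x ∈ s, ∃ z ∈ t, G.Adj x z) : #s ≤ ∑ z ∈ t, #(s ∩ G.neighborFinset z) := by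
  refine (card_le_card fun x hx => ?_).trans card_biUnion_le
  obtain ⟨z, hz, hxz⟩ := h x hx
  exact mem_biUnion.2 ⟨z, hz, mem_inter.2 ⟨hx, (mem_neighborFinset _ _ _).2 hxz.symm⟩⟩

variable (k p q : ℕ)

def lowAdjHigh : Finset V := {v | G.degree v ≤ k ∧ ∃ w, G.Adj v w ∧ p ≤ G.degree w}

def lowNotAdjHigh : Finset V := {v | G.degree v ≤ k ∧ ∀ w, G.Adj v w → G.degree w < p}

def midAdjOnlyLow : Finset V :=
  {v | k < G.degree v ∧ G.degree v < q ∧ ∀ w, G.Adj v w → G.degree w ≤ k}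

variable {G k p q}

theorem isClique_filter_degree_lt
    (h1 : ∀ x y, x ≠ y → ¬G.Adj x y → k ≤ max (G.degree x) (G.degree y)) :
    G.IsClique (({v | G.degree v < k} : Finset V) : Set V) := by
  intro a ha b hb hab
  by_contra hn
  simp only [mem_coe, mem_filter, mem_univ, true_and] at ha hb
  have := h1 a b hab hn
  omega

theorem card_lowNotAdjHigh_le
    (h3 : ∀ x y, x ≠ y → ¬G.Adj x y → max (G.degree x) (G.degree y) ≤ k →
      ∃ z, (G.Adj x z ∨ G.Adj y z) ∧ p ≤ G.degree z) :
    #(lowNotAdjHigh G k p) ≤ k + 1 := by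
  obtain h | ⟨v, hv⟩ := (lowNotAdjHigh G k p).eq_empty_or_nonempty
  · simp [h]
  have hclique : G.IsClique (lowNotAdjHigh G k p : Set V) := by
    intro a ha b hb hab
    by_contra hn
    simp only [lowNotAdjHigh, mem_coe, mem_filter, mem_univ, true_and] at ha hb
    obtain ⟨z, hz | hz, hpz⟩ := h3 a b hab hn (max_le ha.1 hb.1)
    · exact (ha.2 z hz).not_ge hpz
    · exact (hb.2 z hz).not_ge hpz
  have hvk : G.degree v ≤ k := by
    simp only [lowNotAdjHigh, mem_filter, mem_univ, true_and] at hv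
    exact hv.1
  exact (hclique.card_le_degree_add_one hv).trans (by omega)

theorem card_midAdjOnlyLow_le_one
    (h2 : ∀ x y, x ≠ y → ¬G.Adj x y → max (G.degree x) (G.degree y) < q →
      ∃ z, (G.Adj x z ∨ G.Adj y z) ∧ k < G.degree z) :
    #(midAdjOnlyLow G k q) ≤ 1 := by
  rw [card_le_one]
  intro a ha b hb
  by_contra hab
  simp only [midAdjOnlyLow, mem_filter, mem_univ, true_and] at ha hb
  by_cases hadj : G.Adj a b
  · exact (ha.2.2 b hadj).not_gt hb.1
  · obtain ⟨z, hz | hz, hkz⟩ := h2 a b hab hadj (max_lt ha.2.1 hb.2.1)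
    · exact (ha.2.2 z hz).not_gt hkz
    · exact (hb.2.2 z hz).not_gt hkz

variable {α : ℝ}

theorem charge_le_of_le_degree [DecidableEq V] (hkp : k < p) (hα0 : 0 ≤ α) (hα1 : α ≤ 1)
    (hk : (k : ℝ) = (1 - α) * p) (hq : k + α ≤ (1 - α) * q) {v : V} (hv : p ≤ G.degree v) :
    k + α - G.degree v + α * #(lowAdjHigh G k p ∩ G.neighborFinset v) ≤
      if v ∈ midAdjOnlyLow G k q then α else 0 := by
  set lo := #(lowAdjHigh G k p ∩ G.neighborFinset v)
  have hlo : (lo : ℝ) ≤ G.degree v := by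
    rw [← card_neighborFinset_eq_degree]
    exact_mod_cast card_le_card inter_subset_right
  have hpv : (1 - α) * p ≤ (1 - α) * G.degree v :=
    mul_le_mul_of_nonneg_left (by exact_mod_cast hv) (by linarith)
  split_ifs with hmid
  · nlinarith
  simp only [midAdjOnlyLow, mem_filter, mem_univ, true_and, not_and, not_forall, not_le] at hmid
  rcases le_or_gt q (G.degree v) with hqv | hqv
  · have : (1 - α) * q ≤ (1 - α) * G.degree v :=
      mul_le_mul_of_nonneg_left (by exact_mod_cast hqv) (by linarith)
    nlinarith
  · obtain ⟨w, hvw, hkw⟩ := hmid (by omega) hqv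
    have hw : w ∉ lowAdjHigh G k p := by simp [lowAdjHigh]; omega
    have hlt : lo < G.degree v := by
      rw [← card_neighborFinset_eq_degree]
      exact card_lt_card ⟨inter_subset_right, fun h => hw (mem_of_mem_inter_left
        (h ((mem_neighborFinset _ _ _).2 hvw)))⟩
    have : (lo : ℝ) + 1 ≤ G.degree v := by exact_mod_cast hlt
    nlinarith

theorem mem_lowAdjHigh_or_mem_lowNotAdjHigh {v : V} (hv : G.degree v ≤ k) :
    v ∈ lowAdjHigh G k p ∨ v ∈ lowNotAdjHigh G k p := by
  simp only [lowAdjHigh, lowNotAdjHigh, mem_filter, mem_univ, true_and]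
  by_cases h : ∃ w, G.Adj v w ∧ p ≤ G.degree w
  · exact .inl ⟨hv, h⟩
  · push Not at h
    exact .inr ⟨hv, h⟩

theorem charge_le [DecidableEq V] (hkp : k < p) (hα0 : 0 ≤ α) (hα1 : α ≤ 1)
    (hk : (k : ℝ) = (1 - α) * p) (hq : k + α ≤ (1 - α) * q) (v : V) :
    k + α - G.degree v
        + (if p ≤ G.degree v then α * #(lowAdjHigh G k p ∩ G.neighborFinset v) else 0)
        - (if v ∈ lowAdjHigh G k p then α else 0) ≤
      (if G.degree v < k then (k : ℝ) - G.degree v else 0)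
        + (if v ∈ lowNotAdjHigh G k p then α else 0)
        + (if v ∈ midAdjOnlyLow G k q then α else 0) := by
  have hmid : 0 ≤ if v ∈ midAdjOnlyLow G k q then α else 0 := ite_nonneg hα0 le_rfl
  rcases le_or_gt (G.degree v) k with hlow | hhigh
  · have hkv : (k : ℝ) - G.degree v ≤ if G.degree v < k then (k : ℝ) - G.degree v else 0 := by
      split_ifs with h
      · exact le_rfl
      · simp [show G.degree v = k by omega]
    rw [if_neg (show ¬p ≤ G.degree v by omega)]
    rcases mem_lowAdjHigh_or_mem_lowNotAdjHigh (p := p) hlow with hv | hv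
    · have : 0 ≤ if v ∈ lowNotAdjHigh G k p then α else 0 := ite_nonneg hα0 le_rfl
      rw [if_pos hv]
      linarith
    · have hv' : v ∉ lowAdjHigh G k p := fun h => by
        simp only [lowAdjHigh, lowNotAdjHigh, mem_filter, mem_univ, true_and] at h hv
        obtain ⟨w, hvw, hpw⟩ := h.2
        exact (hv.2 w hvw).not_ge hpw
      rw [if_neg hv', if_pos hv]
      linarith
  · have hv : v ∉ lowAdjHigh G k p := by simp [lowAdjHigh]; omega
    have hv' : v ∉ lowNotAdjHigh G k p := by simp [lowNotAdjHigh]; omega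
    rw [if_neg (show ¬G.degree v < k by omega), if_neg hv, if_neg hv']
    by_cases hpv : p ≤ G.degree v
    · rw [if_pos hpv]
      linarith [charge_le_of_le_degree hkp hα0 hα1 hk hq hpv]
    · rw [if_neg hpv]
      have : (k : ℝ) + 1 ≤ G.degree v := by exact_mod_cast hhigh
      linarith

variable (G)

theorem card_mul_le_sum_degree (hkp : k < p) (hq : (p : ℝ) * (k + 1) ≤ q * k + k)
    (h1 : ∀ x y, x ≠ y → ¬G.Adj x y → k ≤ max (G.degree x) (G.degree y))
    (h2 : ∀ x y, x ≠ y → ¬G.Adj x y → max (G.degree x) (G.degree y) < q →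
      ∃ z, (G.Adj x z ∨ G.Adj y z) ∧ k < G.degree z)
    (h3 : ∀ x y, x ≠ y → ¬G.Adj x y → max (G.degree x) (G.degree y) ≤ k →
      ∃ z, (G.Adj x z ∨ G.Adj y z) ∧ p ≤ G.degree z) :
    (k + ((p : ℝ) - k) / p) * Fintype.card V ≤
      ∑ v, (G.degree v : ℝ) + (k + 2) * (((p : ℝ) - k) / p) + (k + 1) ^ 2 / 4 := by
  classical
  set α := ((p : ℝ) - k) / p with hα
  have hp : (0 : ℝ) < p := by exact_mod_cast k.zero_le.trans_lt hkp
  have hkpR : (k : ℝ) < p := by exact_mod_cast hkp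
  have hα0 : 0 ≤ α := div_nonneg (by linarith) hp.le
  have hα1 : α ≤ 1 := (div_le_one hp).2 (by linarith [k.cast_nonneg (α := ℝ)])
  have hk : (k : ℝ) = (1 - α) * p := by rw [hα]; field_simp; ring
  have hqα : k + α ≤ (1 - α) * q := by
    have : (1 - α) * q - (k + α) = (q * k + k - p * (k + 1)) / p := by rw [hα]; field_simp; ring
    linarith [div_nonneg (sub_nonneg.2 hq) hp.le]
  have hdc : (#(lowAdjHigh G k p) : ℝ) ≤
      ∑ v ∈ {v | p ≤ G.degree v}, (#(lowAdjHigh G k p ∩ G.neighborFinset v) : ℝ) := by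
    exact_mod_cast card_le_sum_card_inter_neighborFinset G fun x hx => by
      simp only [lowAdjHigh, mem_filter, mem_univ, true_and] at hx
      obtain ⟨w, hxw, hpw⟩ := hx.2
      exact ⟨w, by simpa using hpw, hxw⟩
  have hsum := sum_le_sum fun v (_ : v ∈ univ) => charge_le (G := G) (q := q) hkp hα0 hα1 hk hqα v
  simp only [sum_add_distrib, sum_sub_distrib, ← sum_filter, filter_mem_eq_inter, univ_inter,
    sum_const, card_univ, nsmul_eq_mul, ← mul_sum] at hsum
  have hF := (isClique_filter_degree_lt h1).sum_sub_degree_le (k : ℝ)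
  simp only [sum_sub_distrib, sum_const, nsmul_eq_mul] at hF
  have hC : (#(lowNotAdjHigh G k p) : ℝ) ≤ k + 1 := by exact_mod_cast card_lowNotAdjHigh_le h3
  have hU : (#(midAdjOnlyLow G k q) : ℝ) ≤ 1 := by exact_mod_cast card_midAdjOnlyLow_le_one h2
  linarith [mul_le_mul_of_nonneg_left hdc hα0, mul_le_mul_of_nonneg_right hC hα0,
    mul_le_mul_of_nonneg_right hU hα0]

end SimpleGraph

end

theorem stmt9_general {β : Type*} [Fintype β] (H : SimpleGraph β)
    (hiso : ∀ u v, H.Adj u v → (edgeNbhd H u v).Nonempty)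
    (h01 : paramK0 H = paramK1 H) (h11 : paramK1 H < paramK1p H)
    (hcond : (paramK1p H : ℝ) +
      ((paramK0p H : ℝ) - (paramK0 H : ℝ)) / ((paramK0 H : ℝ) + 1) ≤ (paramK0p H : ℝ))
    (n : ℕ)
    (G : SimpleGraph (Fin n)) (hG : IsSat G H) :
    ((paramK0 H : ℝ) +
        ((paramK1p H : ℝ) - (paramK0 H : ℝ)) / (paramK1p H : ℝ)) * n / 2 -
      (((paramK0 H : ℝ) + 2) * ((paramK1p H : ℝ) - (paramK0 H : ℝ)) /
          (2 * (paramK1p H : ℝ)) +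
        ((paramK0 H : ℝ) + 1) ^ 2 / 8) ≤
      (G.edgeSet.ncard : ℝ) := by
  classical
  have hq : (paramK1p H : ℝ) * (paramK0 H + 1) ≤ paramK0p H * paramK0 H + paramK0 H := by
    have := (div_le_iff₀ (by positivity : (0 : ℝ) < paramK0 H + 1)).1 (le_sub_iff_add_le'.2 hcond)
    linarith
  have hcount := G.card_mul_le_sum_degree (h01 ▸ h11) hq
    (fun x y hxy hn => hG.paramK0_le_max_degree hiso hxy hn)
    (fun x y hxy hn => hG.exists_adj_paramK0_lt_degree hiso hxy hn h01)
    (fun x y hxy hn => hG.exists_adj_paramK1p_le_degree hiso hxy hn)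
  have hsum : ∑ v, (G.degree v : ℝ) = 2 * G.edgeSet.ncard := by
    rw [← coe_edgeFinset, Set.ncard_coe_finset]
    exact_mod_cast G.sum_degrees_eq_twice_card_edges
  rw [Fintype.card_fin, hsum] at hcount
  have hc2 : ((paramK0 H : ℝ) + 2) * (paramK1p H - paramK0 H) / (2 * paramK1p H) =
      (paramK0 H + 2) * ((paramK1p H - paramK0 H) / paramK1p H) / 2 := by ring
  linarith

/-- Lemma (general, part 2, second case): if `k0 = k1 < k1' < k0'` and
`k0' ≥ k1' + (k0' - k0)/(k0 + 1)`, then `sat(n, H) ≥ (k0 + (k1' - k0)/k1') * n/2 - c2`. -/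
theorem stmt9 {β : Type*} [Fintype β] (H : SimpleGraph β)
    (hedge : ∃ u v, H.Adj u v)
    (hiso : ∀ u v, H.Adj u v → (edgeNbhd H u v).Nonempty)
    (h01 : paramK0 H = paramK1 H) (h11 : paramK1 H < paramK1p H)
    (h10 : paramK1p H < paramK0p H)
    (hcond : (paramK1p H : ℝ) +
      ((paramK0p H : ℝ) - (paramK0 H : ℝ)) / ((paramK0 H : ℝ) + 1) ≤ (paramK0p H : ℝ))
    (n : ℕ) (hn : Fintype.card β ≤ n)
    (G : SimpleGraph (Fin n)) (hG : IsSat G H) :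
    ((paramK0 H : ℝ) +
        ((paramK1p H : ℝ) - (paramK0 H : ℝ)) / (paramK1p H : ℝ)) * n / 2 -
      (((paramK0 H : ℝ) + 2) * ((paramK1p H : ℝ) - (paramK0 H : ℝ)) /
          (2 * (paramK1p H : ℝ)) +
        ((paramK0 H : ℝ) + 1) ^ 2 / 8) ≤
      (G.edgeSet.ncard : ℝ) :=
  stmt9_general H hiso h01 h11 hcond n G hG
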